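/- arXiv:2210.17182 — 4 statements merged into one kernel-verified Lean document; each statement's English description precedes it below -/
import Mathlib

section
/- Landen's trilogarithm functional equation: for every real number z with 0 < z < 1/2, one has Li₃(z) + Li₃(1−z) + Li₃(z/(z−1)) = ζ(3) + ζ(2)·log(1−z) − (1/2)·log(z)·log²(1−z) + (1/6)·log³(1−z). (Note that for 0 < z < 1/2 the arguments z, 1−z lie in (0,1) and z/(z−1) lies in (−1,0), so all three polylogarithm series converge absolutely.) -/
/-- The polylogarithm `Li_k(z) = ∑_{n=1}^∞ zⁿ/n^k` for `|z| < 1`. -/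
noncomputable def Li (k : ℕ) (z : ℝ) : ℝ := ∑' n : ℕ, z ^ (n + 1) / ((n : ℝ) + 1) ^ k

/-- `ζ(k) = ∑_{n=1}^∞ 1/n^k` for `k ≥ 2`. -/
noncomputable def zeta (k : ℕ) : ℝ := ∑' n : ℕ, 1 / ((n : ℝ) + 1) ^ k

open Real Set Filter Topology

/-! Termwise differentiation gives `Li_{k+1}'(z) = Li_k(z) / z`, and `Li_1(z) = -log (1 - z)`.
Hence each of Euler's reflection formula for `Li_2`, Landen's identity for `Li_2` and, using
these two, Landen's identity for `Li_3` reduces to a function with vanishing derivative on an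
interval `(0, a)`; the constant is its limit at `0⁺`, computed from the continuity of
`Li_k` (`k ≥ 2`) on `[-1, 1]`, which holds by the Weierstrass M-test, and from
`log z * log (1 - z) → 0`.
-/

lemma Li_zero_right (k : ℕ) : Li k 0 = 0 := by
  simp [Li]

lemma Li_one_right (k : ℕ) : Li k 1 = zeta k := by
  simp [Li, zeta]

lemma Li_one_eq_neg_log {z : ℝ} (hz : |z| < 1) : Li 1 z = -log (1 - z) := by
  simpa [Li] using (Real.hasSum_pow_div_log_of_abs_lt_one hz).tsum_eq

lemma norm_pow_div_succ_pow_le {y r : ℝ} (hy : |y| ≤ r) (m n k : ℕ) :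
    ‖y ^ m / ((n : ℝ) + 1) ^ k‖ ≤ r ^ m := by
  rw [norm_div, norm_pow, norm_pow, Real.norm_eq_abs, Real.norm_of_nonneg (by positivity)]
  exact (div_le_self (by positivity) (one_le_pow₀ (by simp))).trans
    (pow_le_pow_left₀ (abs_nonneg y) hy m)

lemma hasDerivAt_Li (k : ℕ) {z : ℝ} (h1 : |z| < 1) (h0 : z ≠ 0) :
    HasDerivAt (Li (k + 1)) (Li k z / z) z := by
  obtain ⟨r, hzr, hr1⟩ := exists_between h1
  have hr0 : 0 < r := (abs_nonneg z).trans_lt hzr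
  have hseries := hasDerivAt_tsum_of_isPreconnected
    (g := fun (n : ℕ) (y : ℝ) => y ^ (n + 1) / ((n : ℝ) + 1) ^ (k + 1))
    (g' := fun (n : ℕ) (y : ℝ) => y ^ n / ((n : ℝ) + 1) ^ k)
    (summable_geometric_of_lt_one hr0.le hr1) Metric.isOpen_ball
    (convex_ball 0 r).isPreconnected
    (fun n y _ => ((hasDerivAt_pow (n + 1) y).div_const _).congr_deriv (by
      push_cast; field_simp; ring))
    (fun n y hy => norm_pow_div_succ_pow_le (by simpa using (mem_ball_zero_iff.1 hy).le) n n k)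
    (Metric.mem_ball_self hr0) (by simp) (mem_ball_zero_iff.2 hzr)
  refine hseries.congr_deriv ?_
  rw [Li, ← tsum_div_const]
  exact tsum_congr fun n => by rw [pow_succ']; field_simp

lemma HasDerivAt.Li {f : ℝ → ℝ} {f' x : ℝ} (k : ℕ) (hf : HasDerivAt f f' x)
    (h1 : |f x| < 1) (h0 : f x ≠ 0) :
    HasDerivAt (fun t => Li (k + 1) (f t)) (Li k (f x) / f x * f') x :=
  (hasDerivAt_Li k h1 h0).comp x hf

lemma continuousOn_Li {k : ℕ} (hk : 2 ≤ k) : ContinuousOn (Li k) (Icc (-1) 1) := by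
  have hsum : Summable fun n : ℕ => 1 / ((n : ℝ) + 1) ^ k := by
    simpa using (summable_nat_add_iff 1).2 (summable_one_div_nat_pow.2 hk)
  refine continuousOn_tsum (fun n => (continuous_pow _).div_const _ |>.continuousOn) hsum
    fun n x hx => ?_
  rw [norm_div, norm_pow, norm_pow, Real.norm_eq_abs, Real.norm_of_nonneg (by positivity)]
  exact div_le_div_of_nonneg_right (pow_le_one₀ (abs_nonneg x) (abs_le.2 hx)) (by positivity)

lemma tendsto_Li_comp {k : ℕ} (hk : 2 ≤ k) {l : Filter ℝ} {f : ℝ → ℝ} {c : ℝ}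
    (hf : Tendsto f l (𝓝 c)) (hc : c ∈ Icc (-1) 1) (hmem : ∀ᶠ t in l, f t ∈ Icc (-1) 1) :
    Tendsto (fun t => Li k (f t)) l (𝓝 (Li k c)) :=
  (continuousOn_Li hk c hc).tendsto.comp (tendsto_nhdsWithin_iff.2 ⟨hf, hmem⟩)

lemma abs_div_sub_one_lt_one {z : ℝ} (hz : z < 1 / 2) : |z / (z - 1)| < 1 := by
  rw [abs_div, abs_of_neg (by linarith : z - 1 < 0), div_lt_one (by linarith)]
  exact abs_lt.2 ⟨by linarith, by linarith⟩

lemma Li_one_div_sub_one {z : ℝ} (hz : z < 1 / 2) : Li 1 (z / (z - 1)) = log (1 - z) := by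
  have h : 1 - z / (z - 1) = (1 - z)⁻¹ := by
    field_simp [(by linarith : z - 1 ≠ 0), (by linarith : 1 - z ≠ 0)]
    ring
  rw [Li_one_eq_neg_log (abs_div_sub_one_lt_one hz), h, log_inv, neg_neg]

lemma hasDerivAt_div_sub_one {y : ℝ} (hy : y ≠ 1) :
    HasDerivAt (fun t => t / (t - 1)) (-1 / (y - 1) ^ 2) y := by
  refine ((hasDerivAt_id' y).div ((hasDerivAt_id' y).sub_const 1)
    (sub_ne_zero.2 hy)).congr_deriv ?_
  ring

lemma tendsto_Li_nhdsGT_zero {k : ℕ} (hk : 2 ≤ k) : Tendsto (Li k) (𝓝[>] 0) (𝓝 0) := by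
  simpa [Li_zero_right] using tendsto_Li_comp hk (c := 0)
    (tendsto_id.mono_left nhdsWithin_le_nhds) (by norm_num)
    (mem_nhdsWithin_of_mem_nhds (Icc_mem_nhds (by norm_num) (by norm_num)))

lemma tendsto_Li_one_sub_nhdsGT_zero {k : ℕ} (hk : 2 ≤ k) :
    Tendsto (fun t => Li k (1 - t)) (𝓝[>] 0) (𝓝 (zeta k)) := by
  rw [← Li_one_right]
  refine tendsto_Li_comp hk
    (((continuous_sub_left 1).tendsto' 0 1 (sub_zero 1)).mono_left nhdsWithin_le_nhds)
    (by norm_num) ?_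
  filter_upwards [Ioo_mem_nhdsGT one_pos] with t ⟨ht0, ht1⟩
  exact ⟨by linarith, by linarith⟩

lemma tendsto_Li_div_sub_one_nhdsGT_zero {k : ℕ} (hk : 2 ≤ k) :
    Tendsto (fun t => Li k (t / (t - 1))) (𝓝[>] 0) (𝓝 0) := by
  have hcont : ContinuousAt (fun t : ℝ => t / (t - 1)) 0 := by fun_prop (disch := norm_num)
  simpa [Li_zero_right] using tendsto_Li_comp hk (hcont.tendsto.mono_left nhdsWithin_le_nhds)
    (by norm_num) (by
      filter_upwards [Ioo_mem_nhdsGT (by norm_num : (0 : ℝ) < 1 / 2)] with t ht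
      exact abs_le.1 (abs_div_sub_one_lt_one ht.2).le)

lemma tendsto_log_mul_log_one_sub :
    Tendsto (fun z => log z * log (1 - z)) (𝓝[>] 0) (𝓝 0) := by
  have hbigO : (fun z => log (1 - z)) =O[𝓝 0] fun z => z := by
    have := (((hasDerivAt_id' (0 : ℝ)).const_sub 1).log (by norm_num)).isBigO_sub
    simpa using this
  have hzlogz : Tendsto (fun z => log z * z) (𝓝[>] 0) (𝓝 0) := by
    simpa [mul_comm] using (continuous_mul_log.tendsto 0).mono_left nhdsWithin_le_nhds
  exact ((Asymptotics.isBigO_refl log _).mul (hbigO.mono nhdsWithin_le_nhds)).trans_tendsto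
    hzlogz

lemma eq_of_hasDerivAt_zero_of_tendsto {F : ℝ → ℝ} {a b L x : ℝ}
    (hF : ∀ y ∈ Ioo a b, HasDerivAt F 0 y) (hlim : Tendsto F (𝓝[>] a) (𝓝 L))
    (hx : x ∈ Ioo a b) : F x = L := by
  have hconst : ∀ y ∈ Ioo a b, F y = F x := fun y hy =>
    isOpen_Ioo.is_const_of_deriv_eq_zero isPreconnected_Ioo
      (fun z hz => (hF z hz).differentiableAt.differentiableWithinAt)
      (fun z hz => (hF z hz).deriv) hy hx
  refine tendsto_nhds_unique (tendsto_const_nhds.congr' ?_) hlim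
  filter_upwards [Ioo_mem_nhdsGT (hx.1.trans hx.2)] with y hy
  exact (hconst y hy).symm

theorem Li_two_add_Li_two_one_sub {x : ℝ} (h0 : 0 < x) (h1 : x < 1) :
    Li 2 x + Li 2 (1 - x) = zeta 2 - log x * log (1 - x) := by
  suffices Li 2 x + Li 2 (1 - x) + log x * log (1 - x) = zeta 2 by linarith
  refine eq_of_hasDerivAt_zero_of_tendsto (a := 0) (b := 1)
    (F := fun t => Li 2 t + Li 2 (1 - t) + log t * log (1 - t))
    (fun y ⟨hy0, hy1⟩ => ?_) ?_ ⟨h0, h1⟩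
  · have habs : |y| < 1 := abs_lt.2 ⟨by linarith, hy1⟩
    have habs' : |1 - y| < 1 := abs_lt.2 ⟨by linarith, by linarith⟩
    have hsub := (hasDerivAt_id' y).const_sub 1
    refine (((hasDerivAt_id' y).Li 1 habs hy0.ne').add (hsub.Li 1 habs' (by linarith))
      |>.add ((hasDerivAt_log hy0.ne').mul (hsub.log (by linarith)))).congr_deriv ?_
    rw [Li_one_eq_neg_log habs, Li_one_eq_neg_log habs', sub_sub_cancel]
    field_simp [(by linarith : 1 - y ≠ 0)]
    ring
  · simpa using ((tendsto_Li_nhdsGT_zero le_rfl).add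
      (tendsto_Li_one_sub_nhdsGT_zero le_rfl)).add tendsto_log_mul_log_one_sub

theorem Li_two_div_sub_one {x : ℝ} (h0 : 0 < x) (h1 : x < 1 / 2) :
    Li 2 (x / (x - 1)) = -Li 2 x - log (1 - x) ^ 2 / 2 := by
  suffices Li 2 (x / (x - 1)) + Li 2 x + log (1 - x) ^ 2 / 2 = 0 by linarith
  refine eq_of_hasDerivAt_zero_of_tendsto (a := 0) (b := 1 / 2)
    (F := fun t => Li 2 (t / (t - 1)) + Li 2 t + log (1 - t) ^ 2 / 2)
    (fun y ⟨hy0, hy1⟩ => ?_) ?_ ⟨h0, h1⟩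
  · have hy1' : y - 1 ≠ 0 := by linarith
    have habs : |y| < 1 := abs_lt.2 ⟨by linarith, by linarith⟩
    have hLi := ((hasDerivAt_div_sub_one (by linarith)).Li 1 (abs_div_sub_one_lt_one hy1)
      (div_ne_zero hy0.ne' hy1')).add ((hasDerivAt_id' y).Li 1 habs hy0.ne')
    have hsq := ((((hasDerivAt_id' y).const_sub 1).log (by linarith)).pow 2).div_const 2
    refine (hLi.add hsq).congr_deriv ?_
    rw [Li_one_div_sub_one hy1, Li_one_eq_neg_log habs]
    field_simp [(by linarith : 1 - y ≠ 0)]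
    ring
  · have hlog : ContinuousAt (fun t : ℝ => log (1 - t) ^ 2 / 2) 0 := by
      fun_prop (disch := norm_num)
    simpa using ((tendsto_Li_div_sub_one_nhdsGT_zero le_rfl).add
      (tendsto_Li_nhdsGT_zero le_rfl)).add (hlog.tendsto.mono_left nhdsWithin_le_nhds)

lemma hasDerivAt_landen_trilog {y : ℝ} (hy0 : 0 < y) (hy1 : y < 1 / 2) :
    HasDerivAt (fun t => Li 3 t + Li 3 (1 - t) + Li 3 (t / (t - 1))
      + log t * log (1 - t) ^ 2 / 2 - (zeta 2 * log (1 - t) + log (1 - t) ^ 3 / 6)) 0 y := by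
  have hy1' : y - 1 ≠ 0 := by linarith
  have habs : |y| < 1 := abs_lt.2 ⟨by linarith, by linarith⟩
  have habs' : |1 - y| < 1 := abs_lt.2 ⟨by linarith, by linarith⟩
  have hsub := (hasDerivAt_id' y).const_sub 1
  have hlog := hsub.log (by linarith)
  have hLi := ((hasDerivAt_id' y).Li 2 habs hy0.ne').add (hsub.Li 2 habs' (by linarith)) |>.add
    ((hasDerivAt_div_sub_one (by linarith)).Li 2 (abs_div_sub_one_lt_one hy1)
      (div_ne_zero hy0.ne' hy1'))
  have hprod := ((hasDerivAt_log hy0.ne').mul (hlog.pow 2)).div_const 2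
  have hpoly := (hlog.const_mul (zeta 2)).add ((hlog.pow 3).div_const 6)
  refine ((hLi.add hprod).sub hpoly).congr_deriv ?_
  have hrefl : Li 2 (1 - y) = zeta 2 - log y * log (1 - y) - Li 2 y := by
    linarith [Li_two_add_Li_two_one_sub hy0 (by linarith)]
  simp only [Pi.pow_apply]
  rw [hrefl, Li_two_div_sub_one hy0 hy1]
  field_simp [(by linarith : 1 - y ≠ 0)]
  ring

lemma tendsto_landen_trilog :
    Tendsto (fun t => Li 3 t + Li 3 (1 - t) + Li 3 (t / (t - 1))
      + log t * log (1 - t) ^ 2 / 2 - (zeta 2 * log (1 - t) + log (1 - t) ^ 3 / 6))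
      (𝓝[>] 0) (𝓝 (zeta 3)) := by
  have hlog : ContinuousAt (fun t : ℝ => log (1 - t)) 0 := by fun_prop (disch := norm_num)
  have hlog' : ContinuousAt (fun t : ℝ => zeta 2 * log (1 - t) + log (1 - t) ^ 3 / 6) 0 := by
    fun_prop (disch := norm_num)
  have hprod := (tendsto_log_mul_log_one_sub.mul
    (hlog.tendsto.mono_left nhdsWithin_le_nhds)).div_const 2
  have hLi := ((tendsto_Li_nhdsGT_zero (k := 3) (by norm_num)).add
    (tendsto_Li_one_sub_nhdsGT_zero (k := 3) (by norm_num))).add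
    (tendsto_Li_div_sub_one_nhdsGT_zero (k := 3) (by norm_num))
  simpa [pow_two, mul_assoc] using (hLi.add hprod).sub (hlog'.tendsto.mono_left nhdsWithin_le_nhds)

/-- Landen's trilogarithm functional equation. -/
theorem landen_trilog (z : ℝ) (h0 : 0 < z) (h1 : z < 1 / 2) :
    Li 3 z + Li 3 (1 - z) + Li 3 (z / (z - 1)) =
      zeta 3 + zeta 2 * Real.log (1 - z)
        - (1 / 2) * Real.log z * (Real.log (1 - z)) ^ 2
        + (1 / 6) * (Real.log (1 - z)) ^ 3 := by
  have := eq_of_hasDerivAt_zero_of_tendsto (fun y hy => hasDerivAt_landen_trilog hy.1 hy.2)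
    tendsto_landen_trilog ⟨h0, h1⟩
  linarith
end

section
/- For every real number z with 0 < z < 1/2, one has −Li₃(z/(z−1)) = Li₃(z) + Li_{(1,1,1)}(z) + Li_{(1,2)}(z) + Li_{(2,1)}(z), where Li_{(1,1,1)}(z) = ∑_{0<n₁<n₂<n₃} z^{n₃}/(n₁n₂n₃), Li_{(1,2)}(z) = ∑_{0<m<n} zⁿ/(m·n²) and Li_{(2,1)}(z) = ∑_{0<m<n} zⁿ/(m²·n). (Note that for 0 < z < 1/2 the argument z/(z−1) lies in (−1,0), so the trilogarithm series converges absolutely there.) -/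
/-- The double polylogarithm `Li_{(1,2)}(z) = ∑_{0<m<n} zⁿ/(m·n²)`. -/
noncomputable def Li12 (z : ℝ) : ℝ :=
  ∑' p : {q : ℕ+ × ℕ+ // q.1 < q.2},
    z ^ ((p.1.2 : ℕ)) / (((p.1.1 : ℕ) : ℝ) * ((p.1.2 : ℕ) : ℝ) ^ 2)

/-- The double polylogarithm `Li_{(2,1)}(z) = ∑_{0<m<n} zⁿ/(m²·n)`. -/
noncomputable def Li21 (z : ℝ) : ℝ :=
  ∑' p : {q : ℕ+ × ℕ+ // q.1 < q.2},
    z ^ ((p.1.2 : ℕ)) / (((p.1.1 : ℕ) : ℝ) ^ 2 * ((p.1.2 : ℕ) : ℝ))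

/-- The triple polylogarithm `Li_{(1,1,1)}(z) = ∑_{0<n₁<n₂<n₃} z^{n₃}/(n₁n₂n₃)`. -/
noncomputable def Li111 (z : ℝ) : ℝ :=
  ∑' t : {s : ℕ+ × ℕ+ × ℕ+ // s.1 < s.2.1 ∧ s.2.1 < s.2.2},
    z ^ ((t.1.2.2 : ℕ)) /
      (((t.1.1 : ℕ) : ℝ) * ((t.1.2.1 : ℕ) : ℝ) * ((t.1.2.2 : ℕ) : ℝ))

open Finset

noncomputable def harmonicSum (k N : ℕ) : ℝ := ∑ i ∈ range N, 1 / ((i : ℝ) + 1) ^ k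

noncomputable def harmonicSum₁₁ (N : ℕ) : ℝ :=
  ∑ j ∈ range N, harmonicSum 1 j / ((j : ℝ) + 1)

noncomputable def altChooseSum (k M : ℕ) : ℝ :=
  ∑ n ∈ range M, (-1) ^ n * (M.choose (n + 1) : ℝ) / ((n : ℝ) + 1) ^ k

lemma harmonicSum_succ (k N : ℕ) :
    harmonicSum k (N + 1) = harmonicSum k N + 1 / ((N : ℝ) + 1) ^ k :=
  sum_range_succ _ _

lemma harmonicSum₁₁_succ (N : ℕ) :
    harmonicSum₁₁ (N + 1) = harmonicSum₁₁ N + harmonicSum 1 N / ((N : ℝ) + 1) :=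
  sum_range_succ _ _

lemma harmonicSum_nonneg (k N : ℕ) : 0 ≤ harmonicSum k N :=
  sum_nonneg fun _ _ => by positivity

lemma harmonicSum_le (k N : ℕ) : harmonicSum k N ≤ N := by
  calc harmonicSum k N ≤ ∑ _i ∈ range N, (1 : ℝ) :=
        sum_le_sum fun i _ => div_le_one_of_le₀ (one_le_pow₀ (by simp)) (by positivity)
    _ = N := by simp

lemma harmonicSum₁₁_nonneg (N : ℕ) : 0 ≤ harmonicSum₁₁ N :=
  sum_nonneg fun j _ => div_nonneg (harmonicSum_nonneg 1 j) (by positivity)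

lemma harmonicSum₁₁_le (N : ℕ) : harmonicSum₁₁ N ≤ N := by
  calc harmonicSum₁₁ N ≤ ∑ _j ∈ range N, (1 : ℝ) :=
        sum_le_sum fun j _ => div_le_one_of_le₀ (by linarith [harmonicSum_le 1 j]) (by positivity)
    _ = N := by simp

lemma choose_div_add_one (M n : ℕ) :
    (M.choose n : ℝ) / ((n : ℝ) + 1) = ((M + 1).choose (n + 1) : ℝ) / ((M : ℝ) + 1) := by
  rw [div_eq_div_iff (by positivity) (by positivity), mul_comm]
  exact_mod_cast Nat.add_one_mul_choose_eq M n

lemma altChooseSum_zero (M : ℕ) : altChooseSum 0 (M + 1) = 1 := by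
  have h := Int.alternating_sum_range_choose_of_ne (Nat.succ_ne_zero M)
  rw [sum_range_succ'] at h
  simp only [pow_succ, mul_neg_one, neg_mul, sum_neg_distrib, pow_zero, Nat.choose_zero_right,
    Nat.cast_one, mul_one, neg_add_eq_zero] at h
  simp only [altChooseSum, pow_zero, div_one]
  exact_mod_cast h

lemma sum_alternating_choose_div_pow_succ (k N : ℕ) :
    ∑ n ∈ range (N + 1), (-1) ^ n * (N.choose n : ℝ) / ((n : ℝ) + 1) ^ (k + 1)
      = altChooseSum k (N + 1) / ((N : ℝ) + 1) := by
  rw [altChooseSum, sum_div]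
  refine sum_congr rfl fun n _ => ?_
  rw [pow_succ, ← div_div, div_right_comm, mul_div_assoc, choose_div_add_one]
  ring

lemma altChooseSum_succ_succ (k M : ℕ) :
    altChooseSum (k + 1) (M + 1)
      = altChooseSum (k + 1) M + altChooseSum k (M + 1) / ((M : ℝ) + 1) := by
  rw [← sum_alternating_choose_div_pow_succ, altChooseSum, altChooseSum]
  simp only [Nat.choose_succ_succ', Nat.cast_add, mul_add, add_div, sum_add_distrib]
  rw [add_comm, sum_range_succ _ M, Nat.choose_succ_self]
  simp

lemma altChooseSum_one (M : ℕ) : altChooseSum 1 M = harmonicSum 1 M := by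
  induction M with
  | zero => simp [altChooseSum, harmonicSum]
  | succ M ih =>
    rw [altChooseSum_succ_succ, altChooseSum_zero, ih, harmonicSum_succ, pow_one]

lemma altChooseSum_two (M : ℕ) : altChooseSum 2 M = harmonicSum 2 M + harmonicSum₁₁ M := by
  induction M with
  | zero => simp [altChooseSum, harmonicSum, harmonicSum₁₁]
  | succ M ih =>
    rw [altChooseSum_succ_succ, ih, altChooseSum_one, harmonicSum_succ, harmonicSum_succ,
      harmonicSum₁₁_succ]
    field_simp
    ring

lemma sum_alternating_choose_div_pow_three (N : ℕ) :
    ∑ n ∈ range (N + 1), (-1) ^ n * (N.choose n : ℝ) / ((n : ℝ) + 1) ^ 3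
      = 1 / ((N : ℝ) + 1) ^ 3 + harmonicSum₁₁ N / ((N : ℝ) + 1)
        + harmonicSum 1 N / ((N : ℝ) + 1) ^ 2 + harmonicSum 2 N / ((N : ℝ) + 1) := by
  rw [sum_alternating_choose_div_pow_succ 2, altChooseSum_two, harmonicSum_succ,
    harmonicSum₁₁_succ]
  field_simp
  ring

lemma summable_Li_series (k : ℕ) {z : ℝ} (hz : |z| < 1) :
    Summable fun n : ℕ => z ^ (n + 1) / ((n : ℝ) + 1) ^ k := by
  refine Summable.of_norm_bounded (summable_geometric_of_lt_one (abs_nonneg z) hz) fun n => ?_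
  rw [Real.norm_eq_abs, abs_div, abs_pow,
    abs_of_pos (by positivity : (0 : ℝ) < ((n : ℝ) + 1) ^ k)]
  calc |z| ^ (n + 1) / ((n : ℝ) + 1) ^ k ≤ |z| ^ (n + 1) :=
        div_le_self (by positivity) (one_le_pow₀ (by simp))
    _ ≤ |z| ^ n := pow_le_pow_of_le_one (abs_nonneg z) hz.le n.le_succ

lemma hasSum_Li (k : ℕ) {z : ℝ} (hz : |z| < 1) :
    HasSum (fun n : ℕ => z ^ (n + 1) / ((n : ℝ) + 1) ^ k) (Li k z) :=
  (summable_Li_series k hz).hasSum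

lemma hasSum_choose_mul_pow_succ (n : ℕ) {z : ℝ} (hz : |z| < 1) :
    HasSum (fun N : ℕ => (N.choose n : ℝ) * z ^ (N + 1)) ((z / (1 - z)) ^ (n + 1)) := by
  have h := (hasSum_choose_mul_geometric_of_norm_lt_one n
    (by rwa [Real.norm_eq_abs])).mul_left (z ^ (n + 1))
  rw [← hasSum_nat_add_iff' n, sum_eq_zero fun i hi => by
    rw [Nat.choose_eq_zero_of_lt (mem_range.1 hi), Nat.cast_zero, zero_mul], sub_zero,
    div_pow, div_eq_mul_one_div]
  exact h.congr_fun fun m => by ring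

lemma hasSum_neg_pow_div_sub_one (n : ℕ) {z : ℝ} (hz : |z| < 1) :
    HasSum (fun N : ℕ => (-1) ^ n * (N.choose n : ℝ) * z ^ (N + 1))
      (-(z / (z - 1)) ^ (n + 1)) := by
  rw [show -(z / (z - 1)) ^ (n + 1) = (-1) ^ n * (z / (1 - z)) ^ (n + 1) by
    rw [← neg_sub, div_neg, neg_pow, pow_succ]
    ring]
  exact ((hasSum_choose_mul_pow_succ n hz).mul_left _).congr_fun fun N => by ring

lemma hasSum_neg_Li_div_sub_one (k : ℕ) {z : ℝ} (hz : |z| < 1 / 2) :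
    HasSum (fun N : ℕ => z ^ (N + 1) *
        ∑ n ∈ range (N + 1), (-1) ^ n * (N.choose n : ℝ) / ((n : ℝ) + 1) ^ k)
      (-Li k (z / (z - 1))) := by
  have hz1 : |z| < 1 := by linarith
  set g : ℕ × ℕ → ℝ := fun p =>
    1 / ((p.1 : ℝ) + 1) ^ k * ((-1) ^ p.1 * (p.2.choose p.1 : ℝ) * z ^ (p.2 + 1))
  have hrow : ∀ n,
      HasSum (fun N => g (n, N)) (-((z / (z - 1)) ^ (n + 1) / ((n : ℝ) + 1) ^ k)) :=
    fun n => by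
      have h := (hasSum_neg_pow_div_sub_one n hz1).mul_left (1 / ((n : ℝ) + 1) ^ k)
      rwa [one_div_mul_eq_div, neg_div] at h
  have hrow_abs : ∀ n, HasSum (fun N => |g (n, N)|)
      (1 / ((n : ℝ) + 1) ^ k * (|z| / (1 - |z|)) ^ (n + 1)) := fun n =>
    ((hasSum_choose_mul_pow_succ n (by rwa [abs_abs])).mul_left _).congr_fun fun N => by
      simp [g, abs_mul, abs_pow, abs_of_nonneg (by positivity : (0 : ℝ) ≤ (n : ℝ) + 1)]
  -- this is where `|z| < 1 / 2` is needed: it makes the double series absolutely convergent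
  have hr : |(|z| / (1 - |z|))| < 1 := by
    rw [abs_of_nonneg (div_nonneg (abs_nonneg z) (by linarith)), div_lt_one (by linarith)]
    linarith
  have hg : Summable g := by
    refine summable_abs_iff.1 ((summable_prod_of_nonneg fun _ => abs_nonneg _).2
      ⟨fun n => (hrow_abs n).summable, ?_⟩)
    simpa only [fun n => (hrow_abs n).tsum_eq, one_div_mul_eq_div] using summable_Li_series k hr
  have hsum : HasSum g (-Li k (z / (z - 1))) := by
    have h := (hg.hasSum.prod_fiberwise hrow).neg
    simp only [neg_neg] at h
    rw [Li, h.tsum_eq, neg_neg]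
    exact hg.hasSum
  -- summing over `n` first, only `n ≤ N` contributes since `C(N, n) = 0` for `n > N`
  refine (((Equiv.prodComm ℕ ℕ).hasSum_iff.2 hsum).prod_fiberwise fun N =>
    hasSum_sum_of_ne_finset_zero (s := range (N + 1)) fun n hn => ?_).congr_fun fun N => ?_
  · rw [mem_range, not_lt] at hn
    simp [g, Nat.choose_eq_zero_of_lt (Nat.lt_of_succ_le hn)]
  · rw [mul_sum]
    refine sum_congr rfl fun n _ => ?_
    simp only [g, Function.comp, Equiv.prodComm_apply, Prod.swap]
    ring

@[simps]
def pairsEquiv : (Σ N : ℕ, Fin N) ≃ {q : ℕ+ × ℕ+ // q.1 < q.2} where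
  toFun x := ⟨((x.2 : ℕ).succPNat, x.1.succPNat), Nat.succPNat_lt_succPNat.2 x.2.isLt⟩
  invFun q := ⟨q.1.2.natPred, q.1.1.natPred, PNat.natPred_lt_natPred.2 q.2⟩
  left_inv _ := rfl
  right_inv _ := by simp

@[simps]
def triplesEquiv : (Σ N : ℕ, Σ j : Fin N, Fin j) ≃
    {s : ℕ+ × ℕ+ × ℕ+ // s.1 < s.2.1 ∧ s.2.1 < s.2.2} where
  toFun x := ⟨((x.2.2 : ℕ).succPNat, (x.2.1 : ℕ).succPNat, x.1.succPNat),
    Nat.succPNat_lt_succPNat.2 x.2.2.isLt, Nat.succPNat_lt_succPNat.2 x.2.1.isLt⟩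
  invFun s := ⟨s.1.2.2.natPred, ⟨s.1.2.1.natPred, PNat.natPred_lt_natPred.2 s.2.2⟩,
    ⟨s.1.1.natPred, PNat.natPred_lt_natPred.2 s.2.1⟩⟩
  left_inv _ := rfl
  right_inv _ := by simp

lemma hasSum_tsum_sigma_of_nonneg {ι : Type*} {β : ι → Type*} [∀ i, Fintype (β i)]
    {f : (Σ i, β i) → ℝ} (hf : ∀ x, 0 ≤ f x)
    (hc : Summable fun i => ∑ b, f ⟨i, b⟩) :
    HasSum (fun i => ∑ b, f ⟨i, b⟩) (∑' x, f x) := by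
  have hs : Summable f :=
    (summable_sigma_of_nonneg hf).2 ⟨fun _ => (hasSum_fintype _).summable, by simpa using hc⟩
  exact hs.hasSum.sigma fun _ => hasSum_fintype _

lemma summable_pow_succ_mul {z : ℝ} (hz0 : 0 ≤ z) (hz1 : z < 1) {c : ℕ → ℝ}
    (hc0 : ∀ N, 0 ≤ c N) (hc1 : ∀ N, c N ≤ 1) : Summable fun N => z ^ (N + 1) * c N :=
  Summable.of_nonneg_of_le (fun N => mul_nonneg (by positivity) (hc0 N))
    (fun N => mul_le_of_le_one_right (by positivity) (hc1 N))
    ((summable_nat_add_iff 1).2 (summable_geometric_of_lt_one hz0 hz1))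

lemma hasSum_double_polylog {a b : ℕ} (hb : b ≠ 0) {z : ℝ} (hz0 : 0 ≤ z) (hz1 : z < 1) :
    HasSum (fun N : ℕ => z ^ (N + 1) * (harmonicSum a N / ((N : ℝ) + 1) ^ b))
      (∑' p : {q : ℕ+ × ℕ+ // q.1 < q.2},
        z ^ (p.1.2 : ℕ) / (((p.1.1 : ℕ) : ℝ) ^ a * ((p.1.2 : ℕ) : ℝ) ^ b)) := by
  set f : {q : ℕ+ × ℕ+ // q.1 < q.2} → ℝ := fun p =>
    z ^ (p.1.2 : ℕ) / (((p.1.1 : ℕ) : ℝ) ^ a * ((p.1.2 : ℕ) : ℝ) ^ b)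
  have hfib : ∀ N : ℕ, ∑ i : Fin N, f (pairsEquiv ⟨N, i⟩)
      = z ^ (N + 1) * (harmonicSum a N / ((N : ℝ) + 1) ^ b) := by
    intro N
    rw [harmonicSum, sum_div, mul_sum, ← Fin.sum_univ_eq_sum_range]
    refine sum_congr rfl fun i _ => ?_
    simp only [f, pairsEquiv_apply_coe, Nat.succPNat_coe, Nat.cast_succ]
    field_simp
  have hc : Summable fun N : ℕ => z ^ (N + 1) * (harmonicSum a N / ((N : ℝ) + 1) ^ b) := by
    refine summable_pow_succ_mul hz0 hz1
      (fun N => div_nonneg (harmonicSum_nonneg a N) (by positivity)) fun N => ?_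
    refine div_le_one_of_le₀ ((harmonicSum_le a N).trans ?_) (by positivity)
    exact (le_add_of_nonneg_right zero_le_one).trans (le_self_pow₀ (by simp) hb)
  rw [← pairsEquiv.tsum_eq]
  exact (hasSum_tsum_sigma_of_nonneg (f := fun x => f (pairsEquiv x))
    (fun _ => by positivity) (by simpa only [hfib] using hc)).congr_fun fun N => (hfib N).symm

lemma hasSum_Li12 {z : ℝ} (hz0 : 0 ≤ z) (hz1 : z < 1) :
    HasSum (fun N : ℕ => z ^ (N + 1) * (harmonicSum 1 N / ((N : ℝ) + 1) ^ 2)) (Li12 z) := by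
  simpa only [Li12, pow_one] using hasSum_double_polylog (a := 1) two_ne_zero hz0 hz1

lemma hasSum_Li21 {z : ℝ} (hz0 : 0 ≤ z) (hz1 : z < 1) :
    HasSum (fun N : ℕ => z ^ (N + 1) * (harmonicSum 2 N / ((N : ℝ) + 1))) (Li21 z) := by
  simpa only [Li21, pow_one] using hasSum_double_polylog (a := 2) one_ne_zero hz0 hz1

lemma hasSum_Li111 {z : ℝ} (hz0 : 0 ≤ z) (hz1 : z < 1) :
    HasSum (fun N : ℕ => z ^ (N + 1) * (harmonicSum₁₁ N / ((N : ℝ) + 1))) (Li111 z) := by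
  rw [Li111]
  set f : {s : ℕ+ × ℕ+ × ℕ+ // s.1 < s.2.1 ∧ s.2.1 < s.2.2} → ℝ := fun t =>
    z ^ (t.1.2.2 : ℕ) /
      (((t.1.1 : ℕ) : ℝ) * ((t.1.2.1 : ℕ) : ℝ) * ((t.1.2.2 : ℕ) : ℝ))
  have hfib : ∀ N : ℕ, ∑ x : Σ j : Fin N, Fin j, f (triplesEquiv ⟨N, x⟩)
      = z ^ (N + 1) * (harmonicSum₁₁ N / ((N : ℝ) + 1)) := by
    intro N
    simp only [f, harmonicSum₁₁, harmonicSum, Fintype.sum_sigma, triplesEquiv_apply_coe,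
      Nat.succPNat_coe, Nat.cast_succ, sum_div, mul_sum]
    rw [← Fin.sum_univ_eq_sum_range]
    refine sum_congr rfl fun j _ => ?_
    rw [← Fin.sum_univ_eq_sum_range]
    refine sum_congr rfl fun i _ => ?_
    field_simp
  have hc : Summable fun N : ℕ => z ^ (N + 1) * (harmonicSum₁₁ N / ((N : ℝ) + 1)) :=
    summable_pow_succ_mul hz0 hz1
      (fun N => div_nonneg (harmonicSum₁₁_nonneg N) (by positivity))
      fun N => div_le_one_of_le₀ (by linarith [harmonicSum₁₁_le N]) (by positivity)
  rw [← triplesEquiv.tsum_eq]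
  exact (hasSum_tsum_sigma_of_nonneg (f := fun x => f (triplesEquiv x))
    (fun _ => by positivity) (by simpa only [hfib] using hc)).congr_fun fun N => (hfib N).symm

/-- Trilogarithm at `z/(z−1)` in terms of (multiple) polylogarithms at `z`. -/
theorem neg_trilog_div (z : ℝ) (h0 : 0 < z) (h1 : z < 1 / 2) :
    -Li 3 (z / (z - 1)) = Li 3 z + Li111 z + Li12 z + Li21 z := by
  have hz : |z| < 1 / 2 := by rwa [abs_of_pos h0]
  have hz1 : z < 1 := by linarith
  have hrhs := (((hasSum_Li 3 (by linarith : |z| < 1)).add (hasSum_Li111 h0.le hz1)).add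
    (hasSum_Li12 h0.le hz1)).add (hasSum_Li21 h0.le hz1)
  refine (hasSum_neg_Li_div_sub_one 3 hz).unique (hrhs.congr_fun fun N => ?_)
  rw [sum_alternating_choose_div_pow_three]
  ring
end

section
/- Duality formula for multiple zeta values of the form ζ(1,…,1,2): for every integer k ≥ 2, one has ∑_{0<n₁<⋯<n_{k−1}} 1/(n₁·n₂·⋯·n_{k−2}·n_{k−1}²) = ζ(k), where the sum is over strictly increasing (k−1)-tuples of positive integers, the first k−2 of which occur to the first power and the last of which occurs squared (for k = 2 this reads ∑_{n≥1} 1/n² = ζ(2); for k = 3 this is Euler's relation ζ(1,2) = ζ(3)). -/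
/-!
With the connector `C(m, n) = m! n! / (m + n)!` one has
`C(m, n) - C(m, n + 1) = m C(m, n + 1) / (n + 1)`, so telescoping gives
`∑_{M > N} C(m, M) / M = C(m, N) / m` for `m ≥ 1`. Consequently the connected sums
`Z_a(N) = ∑_{n ≥ 1} C(n, N) / n^(a+1)` satisfy `Z_0(N) = 1/N` and
`Z_{a+1}(N) = ∑_{M > N} Z_a(M) / M`. Splitting off the smallest index shows that the tails
`T_a(N) = ∑_{N < n₁ < ⋯ < n_a} 1 / (n₁ ⋯ n_a · n_a)` satisfy `T_1(N) = ∑_{M > N} 1 / M²` and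
`T_{a+1}(N) = ∑_{M > N} T_a(M) / M`, hence `T_a = Z_a` for `a ≥ 1`. At `N = 0` the tail is
`ζ(1, …, 1, 2)`, while `C(n, 0) = 1` makes `Z_{k-1}(0) = ζ(k)`. All series are taken in `ℝ≥0∞`,
where they can be interchanged without summability side conditions.
-/

open Filter Topology Nat
open scoped ENNReal

theorem hasSum_sub_succ_of_antitone {f : ℕ → ℝ} {l : ℝ} (hf : Antitone f)
    (hl : Tendsto f atTop (𝓝 l)) : HasSum (fun n ↦ f n - f (n + 1)) (f 0 - l) := by
  rw [hasSum_iff_tendsto_nat_of_nonneg fun n ↦ sub_nonneg.2 (hf n.le_succ)]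
  simp_rw [Finset.sum_range_sub']
  exact tendsto_const_nhds.sub hl

theorem ofReal_mul_natCast_inv (c : ℝ) {M : ℕ} (hM : 0 < M) :
    ENNReal.ofReal c * (M : ℝ≥0∞)⁻¹ = ENNReal.ofReal (c / M) := by
  rw [ENNReal.ofReal_div_of_pos (by positivity), ENNReal.ofReal_natCast, div_eq_mul_inv]

namespace MZV

noncomputable def connector (m n : ℕ) : ℝ := (m ! * n ! : ℝ) / (m + n)!

theorem connector_comm (m n : ℕ) : connector m n = connector n m := by
  rw [connector, connector, mul_comm, add_comm]

@[simp]
theorem connector_zero_right (m : ℕ) : connector m 0 = 1 := by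
  simp [connector, (m !).cast_ne_zero.2 m.factorial_ne_zero]

theorem connector_nonneg (m n : ℕ) : 0 ≤ connector m n := by
  unfold connector; positivity

theorem connector_succ_right_mul (m n : ℕ) :
    connector m (n + 1) * (m + n + 1) = connector m n * (n + 1) := by
  unfold connector
  rw [← add_assoc, factorial_succ, factorial_succ]
  push_cast
  field_simp

theorem connector_sub_connector_succ (m n : ℕ) :
    connector m n - connector m (n + 1) = m * (connector m (n + 1) / (n + 1)) := by
  have h := connector_succ_right_mul m n
  field_simp
  linarith

theorem connector_le (m n : ℕ) (hm : 1 ≤ m) : connector m n ≤ m ! / (n + 1) := by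
  have hfac : ((n + 1)! : ℝ) ≤ (m + n)! := by
    exact_mod_cast factorial_le (by omega)
  calc connector m n = m ! * (n ! / (m + n)!) := by rw [connector, mul_div_assoc]
    _ ≤ m ! * (n ! / (n + 1)!) := by gcongr
    _ = m ! / (n + 1) := by
      rw [factorial_succ]; push_cast; field_simp

theorem tendsto_connector_atTop (m : ℕ) (hm : 1 ≤ m) :
    Tendsto (connector m) atTop (𝓝 0) := by
  refine squeeze_zero (connector_nonneg m) (fun n ↦ connector_le m n hm) ?_
  have h := tendsto_one_div_add_atTop_nhds_zero_nat.const_mul (m ! : ℝ)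
  rw [mul_zero] at h
  exact h.congr fun n ↦ mul_one_div _ _

theorem hasSum_connector_div (m N : ℕ) (hm : 1 ≤ m) :
    HasSum (fun i ↦ connector m (N + 1 + i) / (N + 1 + i : ℕ)) (connector m N / m) := by
  have hstep (n : ℕ) : connector m (N + n) - connector m (N + n + 1) =
      m * (connector m (N + 1 + n) / (N + 1 + n : ℕ)) := by
    rw [connector_sub_connector_succ, add_right_comm]; push_cast; ring_nf
  have hanti : Antitone fun n ↦ connector m (N + n) := by
    refine antitone_nat_of_succ_le fun n ↦ sub_nonneg.1 ?_
    rw [← add_assoc, hstep]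
    have := connector_nonneg m (N + 1 + n)
    positivity
  have hlim : Tendsto (fun n ↦ connector m (N + n)) atTop (𝓝 0) :=
    (tendsto_connector_atTop m hm).comp (tendsto_atTop_mono (fun n ↦ le_add_self) tendsto_id)
  have := (hasSum_sub_succ_of_antitone hanti hlim).div_const m
  simp only [add_zero, sub_zero, ← add_assoc, hstep] at this
  have hm' : (m : ℝ) ≠ 0 := by positivity
  simpa [mul_div_cancel_left₀ _ hm'] using this

theorem tsum_connector_mul_inv (m N : ℕ) (hm : 1 ≤ m) :
    ∑' i, ENNReal.ofReal (connector m (N + 1 + i)) * ((N + 1 + i : ℕ) : ℝ≥0∞)⁻¹ =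
      ENNReal.ofReal (connector m N) * (m : ℝ≥0∞)⁻¹ := by
  have hsum := hasSum_connector_div m N hm
  rw [ofReal_mul_natCast_inv _ hm, ← hsum.tsum_eq,
    ENNReal.ofReal_tsum_of_nonneg (fun i ↦ by have := connector_nonneg m (N + 1 + i); positivity)
      hsum.summable]
  exact tsum_congr fun i ↦ ofReal_mul_natCast_inv _ (by omega)

noncomputable def connectedZeta (a N : ℕ) : ℝ≥0∞ :=
  ∑' n : ℕ, ENNReal.ofReal (connector (n + 1) N) * ((n + 1 : ℕ) : ℝ≥0∞)⁻¹ ^ (a + 1)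

theorem connectedZeta_zero (N : ℕ) (hN : 1 ≤ N) : connectedZeta 0 N = (N : ℝ≥0∞)⁻¹ := by
  have h := tsum_connector_mul_inv N 0 hN
  simp only [connector_zero_right, ENNReal.ofReal_one, one_mul, zero_add] at h
  simpa [connectedZeta, connector_comm _ N, add_comm 1] using h

theorem connectedZeta_succ (a N : ℕ) :
    connectedZeta (a + 1) N =
      ∑' i, ((N + 1 + i : ℕ) : ℝ≥0∞)⁻¹ * connectedZeta a (N + 1 + i) := by
  simp_rw [connectedZeta, ← ENNReal.tsum_mul_left]
  rw [ENNReal.tsum_comm]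
  refine tsum_congr fun n ↦ ?_
  calc ENNReal.ofReal (connector (n + 1) N) * ((n + 1 : ℕ) : ℝ≥0∞)⁻¹ ^ (a + 1 + 1)
      = ((n + 1 : ℕ) : ℝ≥0∞)⁻¹ ^ (a + 1) *
          (ENNReal.ofReal (connector (n + 1) N) * ((n + 1 : ℕ) : ℝ≥0∞)⁻¹) := by ring
    _ = ((n + 1 : ℕ) : ℝ≥0∞)⁻¹ ^ (a + 1) * ∑' i, ENNReal.ofReal (connector (n + 1) (N + 1 + i)) *
          ((N + 1 + i : ℕ) : ℝ≥0∞)⁻¹ := by rw [tsum_connector_mul_inv _ _ (by omega)]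
    _ = _ := by rw [← ENNReal.tsum_mul_left]; exact tsum_congr fun i ↦ by ring

theorem toReal_connectedZeta_zero_right (a : ℕ) :
    (connectedZeta a 0).toReal = ∑' n : ℕ, 1 / ((n : ℝ) + 1) ^ (a + 1) := by
  rw [connectedZeta, ENNReal.tsum_toReal_eq fun n ↦ by simp]
  refine tsum_congr fun n ↦ ?_
  simp [one_div, ENNReal.toReal_add]

def strictMonoConsEquiv (a : ℕ) :
    ℕ × {g : Fin a → ℕ+ // StrictMono g} ≃ {g : Fin (a + 1) → ℕ+ // StrictMono g} where
  toFun x := ⟨Fin.cons x.1.succPNat fun i ↦ x.1.succPNat + x.2.1 i,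
    Fin.strictMono_cons.2 ⟨fun _ ↦ lt_add_of_pos_right _ (PNat.pos _),
      fun _ _ hij ↦ add_lt_add_right (x.2.2 hij) _⟩⟩
  invFun g := ((g.1 0).natPred, ⟨fun i ↦ g.1 i.succ - g.1 0, fun i j hij ↦ by
    have hi := PNat.add_sub_of_lt (g.2 (Fin.succ_pos i))
    have hj := PNat.add_sub_of_lt (g.2 (Fin.succ_pos j))
    have hlt := g.2 (Fin.succ_lt_succ_iff.2 hij)
    rw [← hi, ← hj] at hlt
    exact lt_of_add_lt_add_left hlt⟩)
  left_inv x := by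
    obtain ⟨n, g, hg⟩ := x
    ext i
    · simp
    · simp [add_comm n.succPNat, PNat.add_sub]
  right_inv g := by
    ext i
    refine Fin.cases ?_ (fun i ↦ ?_) i
    · simp
    · simp [PNat.add_sub_of_lt (g.2 (Fin.succ_pos i))]

/-- The tail `T_a(N)`, with `N < n₁ < ⋯ < n_a` encoded as `nᵢ = N + g i` for a strictly
increasing `g` with positive values. -/
noncomputable def onesTwoTail (a N : ℕ) : ℝ≥0∞ :=
  ∑' g : {g : Fin a → ℕ+ // StrictMono g},
    ∏ i, ((N + g.1 i : ℕ) : ℝ≥0∞)⁻¹ ^ (if (i : ℕ) = a - 1 then 2 else 1)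

@[simp]
theorem onesTwoTail_zero (N : ℕ) : onesTwoTail 0 N = 1 := by
  have : Fintype.card {g : Fin 0 → ℕ+ // StrictMono g} = 1 :=
    Fintype.card_eq_one_iff.2 ⟨⟨Fin.elim0, fun i ↦ i.elim0⟩, fun _ ↦ Subsingleton.elim _ _⟩
  simp [onesTwoTail, this]

theorem onesTwoTail_succ (a N : ℕ) :
    onesTwoTail (a + 1) N = ∑' n, ((N + 1 + n : ℕ) : ℝ≥0∞)⁻¹ ^ (if a = 0 then 2 else 1) *
      onesTwoTail a (N + 1 + n) := by
  rw [onesTwoTail, ← (strictMonoConsEquiv a).tsum_eq, ENNReal.tsum_prod']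
  refine tsum_congr fun n ↦ ?_
  rw [onesTwoTail, ← ENNReal.tsum_mul_left]
  refine tsum_congr fun g ↦ ?_
  rw [Fin.prod_univ_succ]
  have hexp (i : Fin a) : ((i.succ : ℕ) = a + 1 - 1) ↔ ((i : ℕ) = a - 1) := by
    simp only [Fin.val_succ]; omega
  simp only [strictMonoConsEquiv, Equiv.coe_fn_mk, Fin.cons_zero, Fin.cons_succ, PNat.add_coe,
    Nat.succPNat_coe, Fin.val_zero, hexp]
  rw [show N + 1 + n = N + n.succ by omega]
  simp only [← add_assoc, eq_comm (a := 0), Nat.add_sub_cancel]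

theorem toReal_onesTwoTail_zero_right (a : ℕ) :
    (onesTwoTail a 0).toReal = ∑' g : {g : Fin a → ℕ+ // StrictMono g},
      1 / ∏ i, ((g.1 i : ℕ) : ℝ) ^ (if (i : ℕ) = a - 1 then 2 else 1) := by
  rw [onesTwoTail, ENNReal.tsum_toReal_eq fun g ↦ ENNReal.prod_ne_top fun i _ ↦
    ENNReal.pow_ne_top (ENNReal.inv_ne_top.2 (by simp))]
  refine tsum_congr fun g ↦ ?_
  rw [ENNReal.toReal_prod, one_div, ← Finset.prod_inv_distrib]
  refine Finset.prod_congr rfl fun i _ ↦ ?_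
  rw [ENNReal.toReal_pow, ENNReal.toReal_inv, ENNReal.toReal_natCast, zero_add, inv_pow]

theorem onesTwoTail_eq_connectedZeta (a : ℕ) (ha : 1 ≤ a) : onesTwoTail a = connectedZeta a := by
  induction a, ha using Nat.le_induction with
  | base =>
    funext N
    rw [onesTwoTail_succ, connectedZeta_succ]
    exact tsum_congr fun i ↦ by rw [connectedZeta_zero _ (by omega)]; simp [sq]
  | succ a ha ih =>
    funext N
    rw [onesTwoTail_succ, connectedZeta_succ, ih, if_neg (by omega)]
    simp only [pow_one]

end MZV

/-- Duality formula `ζ(1,…,1,2) = ζ(k)` for `k ≥ 2`: the multiple zeta value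
`∑_{0<n₁<⋯<n_{k−1}} 1/(n₁⋯n_{k−2}·n_{k−1}²)` is written as a `tsum` over
strictly increasing `(k−1)`-tuples of positive integers, where only the last
entry is squared, and `ζ(k) = ∑_{n=1}^∞ 1/n^k`. -/
theorem mzv_ones_two_duality (k : ℕ) (hk : 2 ≤ k) :
    (∑' f : {g : Fin (k - 1) → ℕ+ // StrictMono g},
        (1 : ℝ) / ∏ i : Fin (k - 1),
          ((f.1 i : ℕ) : ℝ) ^ (if (i : ℕ) = k - 2 then 2 else 1))
      = ∑' n : ℕ, (1 : ℝ) / ((n : ℝ) + 1) ^ k := by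
  calc _ = (MZV.onesTwoTail (k - 1) 0).toReal := by
        rw [MZV.toReal_onesTwoTail_zero_right, Nat.sub_sub]
    _ = (MZV.connectedZeta (k - 1) 0).toReal := by
        rw [MZV.onesTwoTail_eq_connectedZeta _ (by omega)]
    _ = _ := by rw [MZV.toReal_connectedZeta_zero_right, Nat.sub_add_cancel (by omega)]
end

section
/- Absolute convergence of multiple polylogarithm series inside the unit disk: for every integer d ≥ 1, every tuple (k₁,…,k_d) of positive integers, and every complex number z with |z| < 1, the family of complex numbers z^{n_d}/(n₁^{k₁}⋯n_d^{k_d}), indexed by strictly increasing d-tuples (n₁,…,n_d) of positive integers, is summable (i.e. the multiple series ∑_{0<n₁<⋯<n_d} z^{n_d}/(n₁^{k₁}⋯n_d^{k_d}) converges absolutely). -/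
/-!
Since `n₁ < ⋯ < n_d` and every denominator has norm at least one, the term indexed by `n` has
norm at most `‖z‖ ^ n_d ≤ ∏ᵢ ρ ^ nᵢ`, where `ρ = ‖z‖ ^ (1/d) < 1`. The right-hand side is summable
over all of `(ℕ+)ᵈ`, being a product of `d` geometric series.
-/

open Finset

theorem summable_fin_pi_prod_of_nonneg {α : Type*} {g : α → ℝ} (hg_nonneg : 0 ≤ g)
    (hg : Summable g) : ∀ n : ℕ, Summable fun f : Fin n → α => ∏ i, g (f i)
  | 0 => by simpa using (Summable.of_finite : Summable fun _ : Fin 0 → α => (1 : ℝ))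
  | n + 1 => by
    have hprod := hg.mul_of_nonneg (summable_fin_pi_prod_of_nonneg hg_nonneg hg n) hg_nonneg
      fun f => prod_nonneg fun i _ => hg_nonneg (f i)
    refine (hprod.comp_injective (Fin.consEquiv fun _ => α).symm.injective).congr fun f => ?_
    simp [Fin.prod_univ_succ, Fin.consEquiv, Fin.tail]

theorem pow_card_pow_le_prod_pow {ι : Type*} [Fintype ι] {ρ : ℝ} (hρ₀ : 0 ≤ ρ) (hρ₁ : ρ ≤ 1)
    {f : ι → ℕ} {N : ℕ} (hf : ∀ i, f i ≤ N) : (ρ ^ Fintype.card ι) ^ N ≤ ∏ i, ρ ^ f i := by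
  rw [pow_right_comm, ← card_univ, ← prod_const]
  exact prod_le_prod (fun _ _ => pow_nonneg hρ₀ _) fun i _ => pow_le_pow_of_le_one hρ₀ hρ₁ (hf i)

theorem norm_pow_div_prod_pnat_pow_le {𝕜 ι : Type*} [RCLike 𝕜] [Fintype ι] (z : 𝕜) (N : ℕ)
    (n : ι → ℕ+) (k : ι → ℕ) : ‖z ^ N / ∏ i, ((n i : ℕ) : 𝕜) ^ k i‖ ≤ ‖z‖ ^ N := by
  have hden : 1 ≤ ‖∏ i, ((n i : ℕ) : 𝕜) ^ k i‖ := by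
    simp only [norm_prod, norm_pow, RCLike.norm_natCast]
    exact one_le_prod fun i _ => one_le_pow₀ (Nat.one_le_cast.2 (n i).pos)
  rw [norm_div, norm_pow]
  exact div_le_self (by positivity) hden

/-- Absolute convergence of the multiple polylogarithm series inside the unit
disk: for `d ≥ 1`, positive integers `k₁,…,k_d`, and `|z| < 1`, the family
`z^{n_d}/(n₁^{k₁}⋯n_d^{k_d})`, indexed by strictly increasing `d`-tuples of
positive integers, is summable. -/
theorem multiPolylog_summable (d : ℕ) (hd : 1 ≤ d) (k : Fin d → ℕ+) (z : ℂ)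
    (hz : ‖z‖ < 1) :
    Summable (fun f : {g : Fin d → ℕ+ // StrictMono g} =>
      z ^ ((f.1 ⟨d - 1, by omega⟩ : ℕ+) : ℕ) /
        ∏ i : Fin d, ((f.1 i : ℕ) : ℂ) ^ ((k i : ℕ+) : ℕ)) := by
  set ρ : ℝ := ‖z‖ ^ (d⁻¹ : ℝ)
  have hρ₀ : 0 ≤ ρ := by positivity
  have hρ₁ : ρ < 1 := Real.rpow_lt_one (norm_nonneg z) hz (by positivity)
  have hρd : ρ ^ d = ‖z‖ := Real.rpow_inv_natCast_pow (norm_nonneg z) (by omega)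
  have hmajorant := (summable_fin_pi_prod_of_nonneg (fun _ => pow_nonneg hρ₀ _)
    (summable_geometric_of_lt_one hρ₀ hρ₁) d).comp_injective PNat.coe_injective.comp_left
  refine (hmajorant.subtype {g | StrictMono g}).of_norm_bounded fun f => ?_
  have hle_last (i : Fin d) : (f.1 i : ℕ) ≤ f.1 ⟨d - 1, by omega⟩ :=
    f.2.monotone (Fin.le_def.2 (by simp only; omega))
  calc _ ≤ ‖z‖ ^ ((f.1 ⟨d - 1, by omega⟩ : ℕ+) : ℕ) := norm_pow_div_prod_pnat_pow_le _ _ _ _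
    _ = (ρ ^ Fintype.card (Fin d)) ^ ((f.1 ⟨d - 1, by omega⟩ : ℕ+) : ℕ) := by
      rw [Fintype.card_fin, hρd]
    _ ≤ _ := pow_card_pow_le_prod_pow hρ₀ hρ₁.le hle_last
end
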